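/- Let H be a real Hilbert space and T > 0. Suppose z_n → z in H¹(0,T; V*) ∩ L²(0,T; H) for a Hilbert triplet V ⊂ H ⊂ V* with V separable, and y ∈ H¹(0,T;H) ∩ L²(0,T;V). If the Leibniz identity (y(t₂),z_n(t₂))_H − (y(t₁),z_n(t₁))_H = ∫_{t₁}^{t₂} [(y'(s),z_n(s))_H + ⟨z_n'(s),y(s)⟩_V] ds holds for each n (e.g. because z_n ∈ H¹(0,T;H)), then the same identity holds with z_n replaced by z, for every t₁, t₂ ∈ [0,T]. -/

import Mathlib

/-!
Convergence in `H¹(0,T;V*)` controls `zₙ - z` in `C⁰([0,T];V*)`: writing `w = zₙ - z`, the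
identity `w t = w t' + ∫_{t'}^t w'` averaged over `t' ∈ (0,T)` gives
`‖w t‖ ≤ ‖w‖_{L¹}/T + ‖w'‖_{L¹}`. Hence the left-hand sides converge pointwise. The integrands
on the right converge in `L¹(0,T)` by Cauchy–Schwarz, since `y' ∈ L²(H)`, `y ∈ L²(V)` and
`zHₙ → zH`, `zₙ' → z'` in `L²`. The identity passes to the limit.
-/

open MeasureTheory Filter

/-- The canonical embedding `H ⊂ V*` of a Hilbert triplet `V ⊂ H ⊂ V*`. -/
noncomputable def tripletEmb {V H : Type*} [NormedAddCommGroup V] [InnerProductSpace ℝ V]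
    [NormedAddCommGroup H] [InnerProductSpace ℝ H]
    (j : V →L[ℝ] H) (h : H) : StrongDual ℝ V := (innerSL ℝ h).comp j

open Set Topology

section SquareIntegrable

variable {α E F G : Type*} [MeasurableSpace α] {μ : Measure α}
  [NormedAddCommGroup E] [NormedAddCommGroup F]

theorem integral_norm_mul_norm_le_sqrt_mul_sqrt {f : α → E} {g : α → F}
    (hf : MemLp f 2 μ) (hg : MemLp g 2 μ) :
    ∫ x, ‖f x‖ * ‖g x‖ ∂μ ≤ √(∫ x, ‖f x‖ ^ 2 ∂μ) * √(∫ x, ‖g x‖ ^ 2 ∂μ) := by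
  have h := integral_mul_norm_le_Lp_mul_Lq (μ := μ) Real.HolderConjugate.two_two
    (by simpa using hf.norm) (by simpa using hg.norm)
  simp only [norm_norm, Real.rpow_two, one_div] at h
  rwa [Real.sqrt_eq_rpow, Real.sqrt_eq_rpow, one_div]

theorem tendsto_integral_norm_mul_norm_of_tendsto_integral_sq {g : α → F} (hg : MemLp g 2 μ)
    {f : ℕ → α → E} (hf : ∀ n, MemLp (f n) 2 μ)
    (h : Tendsto (fun n => ∫ x, ‖f n x‖ ^ 2 ∂μ) atTop (𝓝 0)) :
    Tendsto (fun n => ∫ x, ‖g x‖ * ‖f n x‖ ∂μ) atTop (𝓝 0) := by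
  refine squeeze_zero (fun n => integral_nonneg fun x => by positivity)
    (fun n => integral_norm_mul_norm_le_sqrt_mul_sqrt hg (hf n)) ?_
  simpa using (tendsto_const_nhds (x := √(∫ x, ‖g x‖ ^ 2 ∂μ))).mul h.sqrt

theorem tendsto_integral_norm_of_tendsto_integral_sq [IsFiniteMeasure μ]
    {f : ℕ → α → E} (hf : ∀ n, MemLp (f n) 2 μ)
    (h : Tendsto (fun n => ∫ x, ‖f n x‖ ^ 2 ∂μ) atTop (𝓝 0)) :
    Tendsto (fun n => ∫ x, ‖f n x‖ ∂μ) atTop (𝓝 0) := by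
  simpa using tendsto_integral_norm_mul_norm_of_tendsto_integral_sq (memLp_const (1 : ℝ)) hf h

theorem integrable_bilin_of_memLp_two [NormedAddCommGroup G] [NormedSpace ℝ E] [NormedSpace ℝ F]
    [NormedSpace ℝ G] (B : E →L[ℝ] F →L[ℝ] G) {f : α → E} {g : α → F}
    (hf : MemLp f 2 μ) (hg : MemLp g 2 μ) :
    Integrable (fun x => B (f x) (g x)) μ :=
  ((hf.norm.integrable_mul hg.norm).const_mul ‖B‖).mono'
    (B.aestronglyMeasurable_comp₂ hf.1 hg.1)
    (ae_of_all _ fun x => by simpa [mul_assoc] using B.le_opNorm₂ (f x) (g x))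

end SquareIntegrable

section Interval

variable {E : Type*} [NormedAddCommGroup E] {f : ℝ → E} {a b t₁ t₂ : ℝ}

theorem uIoc_ae_le_Ioo {μ : Measure ℝ} [NullSingletonClass μ] (h₁ : t₁ ∈ Icc a b)
    (h₂ : t₂ ∈ Icc a b) :
    uIoc t₁ t₂ ≤ᵐ[μ] Ioo a b :=
  (Ioc_subset_Ioc (le_min h₁.1 h₂.1) (max_le h₁.2 h₂.2)).eventuallyLE.trans Ioo_ae_eq_Ioc.symm.le

theorem MeasureTheory.IntegrableOn.intervalIntegrable_of_mem_Icc (hf : IntegrableOn f (Ioo a b))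
    (h₁ : t₁ ∈ Icc a b) (h₂ : t₂ ∈ Icc a b) : IntervalIntegrable f volume t₁ t₂ :=
  (((integrableOn_Icc_iff_integrableOn_Ioo).mpr hf).mono_set
    (uIcc_subset_Icc h₁ h₂)).intervalIntegrable

variable [NormedSpace ℝ E]

theorem norm_intervalIntegral_le_setIntegral_norm (hf : IntegrableOn f (Ioo a b))
    (h₁ : t₁ ∈ Icc a b) (h₂ : t₂ ∈ Icc a b) :
    ‖∫ s in t₁..t₂, f s‖ ≤ ∫ s in Ioo a b, ‖f s‖ :=
  intervalIntegral.norm_integral_le_integral_norm_uIoc.trans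
    (setIntegral_mono_set hf.norm (ae_of_all _ fun _ => norm_nonneg _) (uIoc_ae_le_Ioo h₁ h₂))

theorem tendsto_intervalIntegral_of_norm_sub_le {F : ℕ → ℝ → E} {bound : ℕ → ℝ → ℝ}
    (hF : ∀ n, IntegrableOn (F n) (Ioo a b)) (hf : IntegrableOn f (Ioo a b))
    (h_bound : ∀ n s, ‖F n s - f s‖ ≤ bound n s) (h_int : ∀ n, IntegrableOn (bound n) (Ioo a b))
    (h_lim : Tendsto (fun n => ∫ s in Ioo a b, bound n s) atTop (𝓝 0))
    (h₁ : t₁ ∈ Icc a b) (h₂ : t₂ ∈ Icc a b) :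
    Tendsto (fun n => ∫ s in t₁..t₂, F n s) atTop (𝓝 (∫ s in t₁..t₂, f s)) := by
  rw [tendsto_iff_norm_sub_tendsto_zero]
  refine squeeze_zero (fun n => norm_nonneg _) (fun n => ?_) h_lim
  rw [← intervalIntegral.integral_sub ((hF n).intervalIntegrable_of_mem_Icc h₁ h₂)
    (hf.intervalIntegrable_of_mem_Icc h₁ h₂)]
  exact (norm_intervalIntegral_le_setIntegral_norm ((hF n).sub hf) h₁ h₂).trans
    (integral_mono ((hF n).sub hf).norm (h_int n) (h_bound n))

end Interval

section Primitive

variable {E : Type*} [NormedAddCommGroup E] [NormedSpace ℝ E] {T : ℝ}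

/-- For `w' ∈ L¹(0,T)`: `w ∈ W^{1,1}(0,T)` with weak derivative `w'`, in integrated form. -/
def IsPrimitiveOn (w w' : ℝ → E) (T : ℝ) : Prop :=
  ∀ t ∈ Icc 0 T, w t = w 0 + ∫ s in (0 : ℝ)..t, w' s

variable {w w' v v' : ℝ → E}

theorem IsPrimitiveOn.sub_eq_intervalIntegral (hw : IsPrimitiveOn w w' T)
    (hw' : IntegrableOn w' (Ioo 0 T)) {t t' : ℝ} (ht : t ∈ Icc 0 T) (ht' : t' ∈ Icc 0 T) :
    w t - w t' = ∫ s in t'..t, w' s := by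
  have h0 : (0 : ℝ) ∈ Icc 0 T := left_mem_Icc.2 (ht.1.trans ht.2)
  rw [hw t ht, hw t' ht', add_sub_add_left_eq_sub]
  exact intervalIntegral.integral_interval_sub_left (hw'.intervalIntegrable_of_mem_Icc h0 ht)
    (hw'.intervalIntegrable_of_mem_Icc h0 ht')

theorem IsPrimitiveOn.sub (hw : IsPrimitiveOn w w' T) (hv : IsPrimitiveOn v v' T)
    (hw' : IntegrableOn w' (Ioo 0 T)) (hv' : IntegrableOn v' (Ioo 0 T)) :
    IsPrimitiveOn (w - v) (w' - v') T := by
  intro t ht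
  have h0 : (0 : ℝ) ∈ Icc 0 T := left_mem_Icc.2 (ht.1.trans ht.2)
  simp only [Pi.sub_apply]
  rw [intervalIntegral.integral_sub (hw'.intervalIntegrable_of_mem_Icc h0 ht)
    (hv'.intervalIntegrable_of_mem_Icc h0 ht), hw t ht, hv t ht]
  abel

theorem IsPrimitiveOn.norm_sub_le (hw : IsPrimitiveOn w w' T) (hw' : IntegrableOn w' (Ioo 0 T))
    {t t' : ℝ} (ht : t ∈ Icc 0 T) (ht' : t' ∈ Icc 0 T) :
    ‖w t - w t'‖ ≤ ∫ s in Ioo 0 T, ‖w' s‖ := by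
  rw [hw.sub_eq_intervalIntegral hw' ht ht']
  exact norm_intervalIntegral_le_setIntegral_norm hw' ht' ht

theorem IsPrimitiveOn.norm_le (hT : 0 < T) (hw : IsPrimitiveOn w w' T)
    (hw_int : IntegrableOn w (Ioo 0 T)) (hw' : IntegrableOn w' (Ioo 0 T))
    {t : ℝ} (ht : t ∈ Icc 0 T) :
    ‖w t‖ ≤ (∫ s in Ioo 0 T, ‖w s‖) / T + ∫ s in Ioo 0 T, ‖w' s‖ := by
  set C := ∫ s in Ioo 0 T, ‖w' s‖
  have hvol : volume.real (Ioo 0 T) = T := by simp [measureReal_def, hT.le]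
  have hpt : ∀ t' ∈ Ioo 0 T, ‖w t‖ ≤ ‖w t'‖ + C := fun t' ht' =>
    (norm_le_norm_add_norm_sub' (w t) (w t')).trans
      (by gcongr; exact hw.norm_sub_le hw' ht (Ioo_subset_Icc_self ht'))
  have hint : ∫ _ in Ioo 0 T, ‖w t‖ ≤ ∫ t' in Ioo 0 T, (‖w t'‖ + C) :=
    setIntegral_mono_on (integrableOn_const measure_Ioo_lt_top.ne)
      (hw_int.norm.add (integrableOn_const measure_Ioo_lt_top.ne)) measurableSet_Ioo hpt
  rw [setIntegral_const, integral_add hw_int.norm (integrableOn_const measure_Ioo_lt_top.ne),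
    setIntegral_const, hvol, smul_eq_mul, smul_eq_mul] at hint
  rw [div_add' _ _ _ hT.ne', le_div_iff₀ hT]
  linarith

theorem IsPrimitiveOn.tendsto_apply (hT : 0 < T) {f f' : ℕ → ℝ → E}
    (hf : ∀ n, IsPrimitiveOn (f n) (f' n) T) (hw : IsPrimitiveOn w w' T)
    (hf_int : ∀ n, IntegrableOn (f n) (Ioo 0 T)) (hf' : ∀ n, IntegrableOn (f' n) (Ioo 0 T))
    (hw_int : IntegrableOn w (Ioo 0 T)) (hw' : IntegrableOn w' (Ioo 0 T))
    (h_lim : Tendsto (fun n => ∫ s in Ioo 0 T, ‖f n s - w s‖) atTop (𝓝 0))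
    (h_lim' : Tendsto (fun n => ∫ s in Ioo 0 T, ‖f' n s - w' s‖) atTop (𝓝 0))
    {t : ℝ} (ht : t ∈ Icc 0 T) :
    Tendsto (fun n => f n t) atTop (𝓝 (w t)) := by
  rw [tendsto_iff_norm_sub_tendsto_zero]
  refine squeeze_zero (fun n => norm_nonneg _) (fun n => ?_)
    (by simpa using (h_lim.div_const T).add h_lim')
  exact ((hf n).sub hw (hf' n) hw').norm_le hT ((hf_int n).sub hw_int) ((hf' n).sub hw') ht

end Primitive

theorem memLp_of_ae_eq_tripletEmb {α V H : Type*} [NormedAddCommGroup V] [InnerProductSpace ℝ V]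
    [NormedAddCommGroup H] [InnerProductSpace ℝ H] [MeasurableSpace α] {μ : Measure α}
    {p : ENNReal} {j : V →L[ℝ] H} {z : α → StrongDual ℝ V} {zH : α → H}
    (hz : ∀ᵐ t ∂μ, z t = tripletEmb j (zH t)) (hzH : MemLp zH p μ) : MemLp z p μ :=
  ((((ContinuousLinearMap.compL ℝ V H ℝ).flip j).comp (innerSL ℝ)).comp_memLp' hzH).ae_eq
    (hz.mono fun _ h => h.symm)

section Pairing

variable {V H : Type*} [NormedAddCommGroup V] [NormedSpace ℝ V]
  [NormedAddCommGroup H] [InnerProductSpace ℝ H]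

theorem norm_inner_add_apply_sub_le (a b b₀ : H) (v : V) (φ φ₀ : StrongDual ℝ V) :
    ‖(inner ℝ a b + φ v) - (inner ℝ a b₀ + φ₀ v)‖ ≤ ‖a‖ * ‖b - b₀‖ + ‖v‖ * ‖φ - φ₀‖ := by
  have h : (inner ℝ a b + φ v) - (inner ℝ a b₀ + φ₀ v) = inner ℝ a (b - b₀) + (φ - φ₀) v := by
    rw [inner_sub_right, sub_apply]
    ring
  rw [h, mul_comm ‖v‖]
  exact (norm_add_le _ _).trans (add_le_add (norm_inner_le_norm a _) ((φ - φ₀).le_opNorm v))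

variable {y : ℝ → V} {y' : ℝ → H} {a b t₁ t₂ : ℝ}

theorem integrableOn_inner_add_apply {u : ℝ → H} {φ : ℝ → StrongDual ℝ V}
    (hy : MemLp y 2 (volume.restrict (Ioo a b))) (hy' : MemLp y' 2 (volume.restrict (Ioo a b)))
    (hu : MemLp u 2 (volume.restrict (Ioo a b))) (hφ : MemLp φ 2 (volume.restrict (Ioo a b))) :
    IntegrableOn (fun s => inner ℝ (y' s) (u s) + φ s (y s)) (Ioo a b) :=
  (integrable_bilin_of_memLp_two (innerSL ℝ) hy' hu).add
    (integrable_bilin_of_memLp_two (ContinuousLinearMap.id ℝ _) hφ hy)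

theorem tendsto_intervalIntegral_inner_add_apply {u : ℕ → ℝ → H} {u₀ : ℝ → H}
    {φ : ℕ → ℝ → StrongDual ℝ V} {φ₀ : ℝ → StrongDual ℝ V}
    (hy : MemLp y 2 (volume.restrict (Ioo a b))) (hy' : MemLp y' 2 (volume.restrict (Ioo a b)))
    (hu : ∀ n, MemLp (u n) 2 (volume.restrict (Ioo a b)))
    (hu₀ : MemLp u₀ 2 (volume.restrict (Ioo a b)))
    (hφ : ∀ n, MemLp (φ n) 2 (volume.restrict (Ioo a b)))
    (hφ₀ : MemLp φ₀ 2 (volume.restrict (Ioo a b)))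
    (hu_lim : Tendsto (fun n => ∫ s in Ioo a b, ‖u n s - u₀ s‖ ^ 2) atTop (𝓝 0))
    (hφ_lim : Tendsto (fun n => ∫ s in Ioo a b, ‖φ n s - φ₀ s‖ ^ 2) atTop (𝓝 0))
    (h₁ : t₁ ∈ Icc a b) (h₂ : t₂ ∈ Icc a b) :
    Tendsto (fun n => ∫ s in t₁..t₂, (inner ℝ (y' s) (u n s) + φ n s (y s))) atTop
      (𝓝 (∫ s in t₁..t₂, (inner ℝ (y' s) (u₀ s) + φ₀ s (y s)))) := by
  have hdu : ∀ n, MemLp (fun s => u n s - u₀ s) 2 (volume.restrict (Ioo a b)) :=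
    fun n => (hu n).sub hu₀
  have hdφ : ∀ n, MemLp (fun s => φ n s - φ₀ s) 2 (volume.restrict (Ioo a b)) :=
    fun n => (hφ n).sub hφ₀
  have hint_u n := hy'.norm.integrable_mul (hdu n).norm
  have hint_φ n := hy.norm.integrable_mul (hdφ n).norm
  refine tendsto_intervalIntegral_of_norm_sub_le
    (fun n => integrableOn_inner_add_apply hy hy' (hu n) (hφ n))
    (integrableOn_inner_add_apply hy hy' hu₀ hφ₀)
    (fun n s => norm_inner_add_apply_sub_le _ _ _ _ _ _) (fun n => (hint_u n).add (hint_φ n))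
    ?_ h₁ h₂
  simpa only [Pi.mul_apply, add_zero] using
    ((tendsto_integral_norm_mul_norm_of_tendsto_integral_sq hy' hdu hu_lim).add
      (tendsto_integral_norm_mul_norm_of_tendsto_integral_sq hy hdφ hφ_lim)).congr
      fun n => (integral_add (hint_u n) (hint_φ n)).symm

end Pairing

theorem leibniz_identity_limit_general
    {V H : Type*} [NormedAddCommGroup V] [InnerProductSpace ℝ V]
    [NormedAddCommGroup H] [InnerProductSpace ℝ H]
    (j : V →L[ℝ] H)
    (T : ℝ) (hT : 0 < T)
    (y : ℝ → V) (y' : ℝ → H)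
    (zn : ℕ → ℝ → StrongDual ℝ V) (zn' : ℕ → ℝ → StrongDual ℝ V)
    (zHn : ℕ → ℝ → H)
    (z : ℝ → StrongDual ℝ V) (z' : ℝ → StrongDual ℝ V) (zH : ℝ → H)
    -- y ∈ H¹(0,T;H) ∩ L²(0,T;V)
    (hy' : MemLp y' 2 (volume.restrict (Set.Ioo 0 T)))
    (hyV : MemLp y 2 (volume.restrict (Set.Ioo 0 T)))
    -- zₙ, z ∈ H¹(0,T;V*) ∩ L²(0,T;H)
    (hznFTC : ∀ n, ∀ t ∈ Set.Icc 0 T, zn n t = zn n 0 + ∫ s in (0 : ℝ)..t, zn' n s)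
    (hzn' : ∀ n, MemLp (zn' n) 2 (volume.restrict (Set.Ioo 0 T)))
    (hzHn : ∀ n, ∀ᵐ t ∂(volume.restrict (Set.Ioo 0 T)), zn n t = tripletEmb j (zHn n t))
    (hzHnL2 : ∀ n, MemLp (zHn n) 2 (volume.restrict (Set.Ioo 0 T)))
    (hzFTC : ∀ t ∈ Set.Icc 0 T, z t = z 0 + ∫ s in (0 : ℝ)..t, z' s)
    (hz' : MemLp z' 2 (volume.restrict (Set.Ioo 0 T)))
    (hzH : ∀ᵐ t ∂(volume.restrict (Set.Ioo 0 T)), z t = tripletEmb j (zH t))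
    (hzHL2 : MemLp zH 2 (volume.restrict (Set.Ioo 0 T)))
    -- convergence zₙ → z in H¹(0,T;V*) ∩ L²(0,T;H):
    (hconv1 : Tendsto (fun n => ∫ t in Set.Ioo 0 T, ‖zn n t - z t‖ ^ 2) atTop (nhds 0))
    (hconv2 : Tendsto (fun n => ∫ t in Set.Ioo 0 T, ‖zn' n t - z' t‖ ^ 2) atTop (nhds 0))
    (hconv3 : Tendsto (fun n => ∫ t in Set.Ioo 0 T, ‖zHn n t - zH t‖ ^ 2) atTop (nhds 0))
    -- the Leibniz identity for each n
    (hid : ∀ n, ∀ t₁ ∈ Set.Icc 0 T, ∀ t₂ ∈ Set.Icc 0 T,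
      zn n t₂ (y t₂) - zn n t₁ (y t₁)
        = ∫ s in t₁..t₂, ((inner ℝ (y' s) (zHn n s) : ℝ) + zn' n s (y s))) :
    ∀ t₁ ∈ Set.Icc 0 T, ∀ t₂ ∈ Set.Icc 0 T,
      z t₂ (y t₂) - z t₁ (y t₁)
        = ∫ s in t₁..t₂, ((inner ℝ (y' s) (zH s) : ℝ) + z' s (y s)) := by
  intro t₁ ht₁ t₂ ht₂
  have : IsFiniteMeasure (volume.restrict (Ioo (0 : ℝ) T)) :=
    isFiniteMeasure_restrict.2 measure_Ioo_lt_top.ne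
  have hznL2 n := memLp_of_ae_eq_tripletEmb (hzHn n) (hzHnL2 n)
  have hzL2 := memLp_of_ae_eq_tripletEmb hzH hzHL2
  have hLHS : ∀ t ∈ Icc 0 T, Tendsto (fun n => zn n t (y t)) atTop (𝓝 (z t (y t))) :=
    fun t ht => ((continuous_eval_const (y t)).tendsto _).comp <|
      IsPrimitiveOn.tendsto_apply hT hznFTC hzFTC (fun n => (hznL2 n).integrable one_le_two)
        (fun n => (hzn' n).integrable one_le_two) (hzL2.integrable one_le_two)
        (hz'.integrable one_le_two)
        (tendsto_integral_norm_of_tendsto_integral_sq (fun n => (hznL2 n).sub hzL2) hconv1)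
        (tendsto_integral_norm_of_tendsto_integral_sq (fun n => (hzn' n).sub hz') hconv2) ht
  exact tendsto_nhds_unique
    (((hLHS t₂ ht₂).sub (hLHS t₁ ht₁)).congr fun n => hid n t₁ ht₁ t₂ ht₂)
    (tendsto_intervalIntegral_inner_add_apply hyV hy' hzHnL2 hzHL2 hzn' hz' hconv3 hconv2 ht₁ ht₂)

/-- Approximation step in the proof of the Leibniz rule (Lemma 4.7): if
`zₙ → z` in `H¹(0,T;V*) ∩ L²(0,T;H)` (with `H`-representatives `zHₙ → zH` in `L²(0,T;H)`),
`y ∈ H¹(0,T;H) ∩ L²(0,T;V)`, and the Leibniz identity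
`(y(t₂),zₙ(t₂))_H − (y(t₁),zₙ(t₁))_H = ∫_{t₁}^{t₂}[(y'(s),zₙ(s))_H + ⟨zₙ'(s),y(s)⟩_V] ds`
holds for each `n`, then the same identity holds in the limit with `zₙ` replaced by `z`. -/
theorem leibniz_identity_limit
    {V H : Type*} [NormedAddCommGroup V] [InnerProductSpace ℝ V] [CompleteSpace V]
    [NormedAddCommGroup H] [InnerProductSpace ℝ H] [CompleteSpace H]
    (j : V →L[ℝ] H) (hj_inj : Function.Injective j) (hj_dense : DenseRange j)
    (T : ℝ) (hT : 0 < T)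
    (y : ℝ → V) (y' : ℝ → H)
    (zn : ℕ → ℝ → StrongDual ℝ V) (zn' : ℕ → ℝ → StrongDual ℝ V)
    (zHn : ℕ → ℝ → H)
    (z : ℝ → StrongDual ℝ V) (z' : ℝ → StrongDual ℝ V) (zH : ℝ → H)
    -- y ∈ H¹(0,T;H) ∩ L²(0,T;V)
    (hyFTC : ∀ t ∈ Set.Icc 0 T, j (y t) = j (y 0) + ∫ s in (0 : ℝ)..t, y' s)
    (hy' : MemLp y' 2 (volume.restrict (Set.Ioo 0 T)))
    (hyV : MemLp y 2 (volume.restrict (Set.Ioo 0 T)))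
    -- zₙ, z ∈ H¹(0,T;V*) ∩ L²(0,T;H)
    (hznFTC : ∀ n, ∀ t ∈ Set.Icc 0 T, zn n t = zn n 0 + ∫ s in (0 : ℝ)..t, zn' n s)
    (hzn' : ∀ n, MemLp (zn' n) 2 (volume.restrict (Set.Ioo 0 T)))
    (hzHn : ∀ n, ∀ᵐ t ∂(volume.restrict (Set.Ioo 0 T)), zn n t = tripletEmb j (zHn n t))
    (hzHnL2 : ∀ n, MemLp (zHn n) 2 (volume.restrict (Set.Ioo 0 T)))
    (hzFTC : ∀ t ∈ Set.Icc 0 T, z t = z 0 + ∫ s in (0 : ℝ)..t, z' s)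
    (hz' : MemLp z' 2 (volume.restrict (Set.Ioo 0 T)))
    (hzH : ∀ᵐ t ∂(volume.restrict (Set.Ioo 0 T)), z t = tripletEmb j (zH t))
    (hzHL2 : MemLp zH 2 (volume.restrict (Set.Ioo 0 T)))
    -- convergence zₙ → z in H¹(0,T;V*) ∩ L²(0,T;H):
    (hconv1 : Tendsto (fun n => ∫ t in Set.Ioo 0 T, ‖zn n t - z t‖ ^ 2) atTop (nhds 0))
    (hconv2 : Tendsto (fun n => ∫ t in Set.Ioo 0 T, ‖zn' n t - z' t‖ ^ 2) atTop (nhds 0))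
    (hconv3 : Tendsto (fun n => ∫ t in Set.Ioo 0 T, ‖zHn n t - zH t‖ ^ 2) atTop (nhds 0))
    -- the Leibniz identity for each n
    (hid : ∀ n, ∀ t₁ ∈ Set.Icc 0 T, ∀ t₂ ∈ Set.Icc 0 T,
      zn n t₂ (y t₂) - zn n t₁ (y t₁)
        = ∫ s in t₁..t₂, ((inner ℝ (y' s) (zHn n s) : ℝ) + zn' n s (y s))) :
    ∀ t₁ ∈ Set.Icc 0 T, ∀ t₂ ∈ Set.Icc 0 T,
      z t₂ (y t₂) - z t₁ (y t₁)
        = ∫ s in t₁..t₂, ((inner ℝ (y' s) (zH s) : ℝ) + z' s (y s)) :=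
  leibniz_identity_limit_general j T hT y y' zn zn' zHn z z' zH hy' hyV hznFTC hzn' hzHn hzHnL2
    hzFTC hz' hzH hzHL2 hconv1 hconv2 hconv3 hid
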